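/- arXiv:math/9908016 — 5 statements merged into one kernel-verified Lean document; each statement's English description precedes it below -/
import Mathlib

section
/- The map J from C_{p,m} to the set of strictly increasing p-tuples of positive integers J = (j_1 < j_2 < ... < j_p) satisfying j_p - (m+p) < j_1, defined by writing a = pl + r with 0 ≤ r < p and setting J(α^{(a)})_i = l(m+p) + α_{r+i} for 1 ≤ i ≤ p-r and J(α^{(a)})_i = (l+1)(m+p) + α_{i-p+r} for p-r < i ≤ p, is a bijection. -/
def QRow (p m : ℕ) : Type :=
  {α : Fin p → ℕ // StrictMono α ∧ ∀ i, 1 ≤ α i ∧ α i ≤ m + p}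

def QElt (p m : ℕ) : Type := QRow p m × ℕ

/-- The map `J` on `C_{p,m}` : writing `a = p·l + r` with `0 ≤ r < p`,
`J(α^{(a)})_i = l(m+p) + α_{r+i}` for `1 ≤ i ≤ p-r` and
`J(α^{(a)})_i = (l+1)(m+p) + α_{i-p+r}` for `p-r < i ≤ p` (0-based below). -/
def Jmap {p m : ℕ} (x : QElt p m) : Fin p → ℕ := fun i =>
  if h : (i : ℕ) < p - x.2 % p then
    (x.2 / p) * (m + p) + x.1.1 ⟨x.2 % p + i, by
      have h1 := i.isLt; have h2 := Nat.mod_lt x.2 i.pos; omega⟩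
  else
    (x.2 / p + 1) * (m + p) + x.1.1 ⟨(i : ℕ) - (p - x.2 % p), by
      have h1 := i.isLt; omega⟩

/-!
Extend a row `α` to the sequence `β_α (p l + k) = l (m + p) + α_k` (`periodicExt`). Then
`J(α^{(a)})` is just the window `β_α a, …, β_α (a + p - 1)`. Since `1 ≤ α ≤ m + p`, `β_α`
is strictly increasing, satisfies `β_α (n + p) = β_α n + (m + p)`, and `β_α n` lies in the
level `n / p`. So one window determines the whole sequence; the levels then recover `a`, and the
window at a multiple of `p` recovers `α`. Conversely, a tuple `J` of the target set is the window
at `0` of its own extension `β_J`, which is strictly increasing precisely because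
`j_p < j_1 + (m + p)`; cutting `β_J` where it leaves the level of `j_1` produces `α` and `a`.
-/

theorem Nat.eq_of_forall_add_div_eq {a b p : ℕ} (hp : 0 < p)
    (h : ∀ n, (a + n) / p = (b + n) / p) : a = b := by
  wlog hab : a < b generalizing a b
  · rcases (not_lt.1 hab).lt_or_eq with hba | hba
    · exact (this (fun n => (h n).symm) hba).symm
    · exact hba.symm
  -- `b + n` reaches the multiple `p * (b + 1)` while `a + n` is still below it
  have hb : b ≤ p * (b + 1) := by nlinarith
  have key := h (p * (b + 1) - b)
  rw [Nat.add_sub_cancel' hb, Nat.mul_div_cancel_left _ hp] at key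
  have : (a + (p * (b + 1) - b)) / p < b + 1 :=
    (Nat.div_lt_iff_lt_mul hp).2 (by rw [Nat.mul_comm (b + 1)]; omega)
  omega

section QuasiPeriodic

variable {p q : ℕ} {f g : ℕ → ℕ}

theorem add_mul_of_add_period (hf : ∀ n, f (n + p) = f n + q) (n k : ℕ) :
    f (n + p * k) = f n + k * q := by
  induction k with
  | zero => simp
  | succ k ih => rw [Nat.mul_succ, ← Nat.add_assoc, hf, ih, Nat.succ_mul, Nat.add_assoc]

theorem eq_of_eqOn_window (hp : 0 < p) (hf : ∀ n, f (n + p) = f n + q)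
    (hg : ∀ n, g (n + p) = g n + q) {a b s : ℕ}
    (h : ∀ i < p, f (a + (s + i)) = g (b + (s + i)))
    (n : ℕ) : f (a + n) = g (b + n) := by
  have forward : ∀ n, f (a + (s + n)) = g (b + (s + n)) := by
    intro n
    induction n using Nat.strong_induction_on with
    | _ n ih =>
      rcases lt_or_ge n p with hn | hn
      · exact h n hn
      · obtain ⟨k, rfl⟩ := Nat.exists_eq_add_of_le' hn
        simp only [← Nat.add_assoc] at ih ⊢
        rw [hf, hg, ih k (by omega)]
  have hs : s ≤ p * s := Nat.le_mul_of_pos_left s hp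
  have key := forward (n + p * s - s)
  rw [show a + (s + (n + p * s - s)) = a + n + p * s by omega,
    show b + (s + (n + p * s - s)) = b + n + p * s by omega,
    add_mul_of_add_period hf, add_mul_of_add_period hg] at key
  exact Nat.add_right_cancel key

theorem exists_window_mem_Ioc (hf : Monotone f) (hfp : ∀ n, f (n + p) = f n + q)
    {c : ℕ} (hc0 : f 0 ≤ c) (hcp : c < f 0 + q) :
    ∃ t ≤ p, ∀ k < p, f (t + k) ∈ Set.Ioc c (c + q) := by
  have hfp0 : f p = f 0 + q := by simpa using hfp 0
  have hex : ∃ n, c < f n := ⟨p, hfp0 ▸ hcp⟩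
  have ht0 : 0 < Nat.find hex := (Nat.find_pos hex).2 (by omega)
  have hprev : f (Nat.find hex - 1) ≤ c := not_lt.1 (Nat.find_min hex (by omega))
  refine ⟨Nat.find hex, Nat.find_min' hex (hfp0 ▸ hcp), fun k hk => ⟨?_, ?_⟩⟩
  · exact (Nat.find_spec hex).trans_le (hf (Nat.le_add_right _ k))
  · calc f (Nat.find hex + k) ≤ f (Nat.find hex - 1 + p) := hf (by omega)
      _ ≤ c + q := by rw [hfp]; omega

end QuasiPeriodic

section PeriodicExt

variable {p : ℕ} [NeZero p] (q : ℕ) (α : Fin p → ℕ)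

def periodicExt (n : ℕ) : ℕ := n / p * q + α (Fin.ofNat p n)

theorem periodicExt_add_period (n : ℕ) :
    periodicExt q α (n + p) = periodicExt q α n + q := by
  simp only [periodicExt, Nat.add_div_right n (Nat.pos_of_neZero p)]
  rw [show Fin.ofNat p (n + p) = Fin.ofNat p n from Fin.ext (by simp)]
  ring

theorem periodicExt_mul_add (l : ℕ) (k : Fin p) :
    periodicExt q α (p * l + k) = l * q + α k := by
  have hp := Nat.pos_of_neZero p
  simp only [periodicExt, Nat.mul_add_div hp, Nat.div_eq_of_lt k.isLt, Nat.add_zero]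
  congr 2
  exact Fin.ext (by simp [Nat.mod_eq_of_lt k.isLt])

theorem strictMono_periodicExt {α : Fin p → ℕ} (hα : StrictMono α)
    (hwrap : α ⟨p - 1, Nat.sub_one_lt (NeZero.ne p)⟩ < α 0 + q) :
    StrictMono (periodicExt q α) := by
  have hp := Nat.pos_of_neZero p
  refine strictMono_nat_of_lt_succ fun n => ?_
  obtain ⟨l, k, rfl⟩ : ∃ l, ∃ k : Fin p, n = p * l + k :=
    ⟨n / p, ⟨n % p, Nat.mod_lt n hp⟩, (Nat.div_add_mod n p).symm⟩
  rw [periodicExt_mul_add]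
  by_cases hk : (k : ℕ) + 1 < p
  · rw [Nat.add_assoc, show (k : ℕ) + 1 = (⟨k + 1, hk⟩ : Fin p) from rfl,
      periodicExt_mul_add]
    exact Nat.add_lt_add_left (hα (Fin.mk_lt_mk.2 (Nat.lt_succ_self _))) _
  · have hlast : k = ⟨p - 1, Nat.sub_one_lt (NeZero.ne p)⟩ := Fin.ext (by dsimp only; omega)
    rw [show p * l + k + 1 = p * (l + 1) + ((0 : Fin p) : ℕ) by
        rw [hlast, Fin.val_zero, Nat.mul_succ]; dsimp only; omega,
      periodicExt_mul_add, hlast, Nat.succ_mul]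
    omega

variable {q α}

theorem periodicExt_level (hq : ∀ i, 1 ≤ α i ∧ α i ≤ q) (n : ℕ) :
    (periodicExt q α n - 1) / q = n / p := by
  have := hq (Fin.ofNat p n)
  apply Nat.div_eq_of_lt_le <;> simp only [periodicExt, Nat.succ_mul] <;> omega

end PeriodicExt

section Jmap

variable {p m : ℕ} [NeZero p]

theorem Jmap_apply (x : QElt p m) (i : Fin p) :
    Jmap x i = periodicExt (m + p) x.1.1 (x.2 + i) := by
  have hr := Nat.mod_lt x.2 (Nat.pos_of_neZero p)
  have hx := Nat.div_add_mod x.2 p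
  unfold Jmap
  split_ifs with h
  · rw [show x.2 + i = p * (x.2 / p) + ((⟨x.2 % p + i, by omega⟩ : Fin p) : ℕ) by
      dsimp only; omega, periodicExt_mul_add]
  · rw [show x.2 + i = p * (x.2 / p + 1) + ((⟨i - (p - x.2 % p), by omega⟩ : Fin p) : ℕ) by
      dsimp only; rw [Nat.mul_succ]; omega, periodicExt_mul_add]

theorem Jmap_injective : Function.Injective (Jmap (p := p) (m := m)) := by
  have hp := Nat.pos_of_neZero p
  intro x y h
  have hwindow : ∀ n, periodicExt (m + p) x.1.1 (x.2 + n) = periodicExt (m + p) y.1.1 (y.2 + n) :=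
    eq_of_eqOn_window hp (periodicExt_add_period _ _) (periodicExt_add_period _ _) (s := 0)
      fun i hi => by simpa only [Nat.zero_add, Jmap_apply] using congrFun h ⟨i, hi⟩
  have ha : x.2 = y.2 := Nat.eq_of_forall_add_div_eq hp fun n => by
    rw [← periodicExt_level x.1.2.2, ← periodicExt_level y.1.2.2, hwindow]
  refine Prod.ext (Subtype.ext (funext fun k => ?_)) ha
  have hk := hwindow (p * y.2 + k - y.2)
  rw [ha, Nat.add_sub_cancel' (by nlinarith), periodicExt_mul_add, periodicExt_mul_add] at hk
  exact Nat.add_left_cancel hk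

theorem strictMono_periodicExt_row (α : QRow p m) : StrictMono (periodicExt (m + p) α.1) :=
  strictMono_periodicExt _ α.2.1 <| by
    have := (α.2.2 ⟨p - 1, Nat.sub_one_lt (NeZero.ne p)⟩).2
    have := (α.2.2 0).1
    omega

theorem strictMono_Jmap (x : QElt p m) : StrictMono (Jmap x) := fun i j hij => by
  simpa only [Jmap_apply] using strictMono_periodicExt_row x.1 (Nat.add_lt_add_left hij x.2)

theorem one_le_Jmap (x : QElt p m) (i : Fin p) : 1 ≤ Jmap x i := by
  rw [Jmap_apply, periodicExt]
  have := (x.1.2.2 (Fin.ofNat p (x.2 + i))).1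
  omega

theorem Jmap_last_lt (x : QElt p m) :
    Jmap x ⟨p - 1, Nat.sub_one_lt (NeZero.ne p)⟩ < Jmap x 0 + (m + p) := by
  simp only [Jmap_apply]
  rw [← periodicExt_add_period]
  have hp := Nat.pos_of_neZero p
  exact strictMono_periodicExt_row x.1 (by simp only [Fin.val_zero]; omega)

theorem exists_Jmap_eq {J : Fin p → ℕ} (hJ : StrictMono J) (hpos : ∀ i, 1 ≤ J i)
    (hwrap : J ⟨p - 1, Nat.sub_one_lt (NeZero.ne p)⟩ < J 0 + (m + p)) :
    ∃ x : QElt p m, Jmap x = J := by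
  have hp := Nat.pos_of_neZero p
  set q := m + p
  have hJext : StrictMono (periodicExt q J) := strictMono_periodicExt q hJ hwrap
  have hJp := periodicExt_add_period q J
  have hJ0 : periodicExt q J 0 = J 0 := by simpa using periodicExt_mul_add q J 0 0
  obtain ⟨l, hl⟩ : ∃ l, l * q < J 0 ∧ J 0 ≤ (l + 1) * q := by
    have := Nat.div_add_mod (J 0 - 1) q
    have := Nat.mod_lt (J 0 - 1) (show 0 < q by omega)
    have := hpos 0
    refine ⟨(J 0 - 1) / q, ?_, ?_⟩ <;> rw [Nat.mul_comm] <;> [omega; (rw [Nat.mul_succ]; omega)]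
  -- The row is read off the `p` values of the extension of `J` that follow the level of `J 0`.
  obtain ⟨t, htp, hwindow⟩ := exists_window_mem_Ioc hJext.monotone hJp (c := (l + 1) * q)
    (by omega) (by rw [hJ0, Nat.succ_mul]; omega)
  let α : Fin p → ℕ := fun k => periodicExt q J (t + k) - (l + 1) * q
  have hα : StrictMono α := fun i j hij => by
    have := hJext (Nat.add_lt_add_left hij t)
    have := (hwindow i i.isLt).1
    simp only [α]
    omega
  have hαq : ∀ k, 1 ≤ α k ∧ α k ≤ q := fun k => by
    have := hwindow k k.isLt
    simp only [α, Set.mem_Ioc] at this ⊢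
    omega
  let x : QElt p m := (⟨α, hα, hαq⟩, p * l + (p - t))
  refine ⟨x, funext fun i => ?_⟩
  have hagree := eq_of_eqOn_window hp (periodicExt_add_period q α) hJp (b := 0) (s := t)
    fun i hi => by
      rw [show p * l + (p - t) + (t + i) = p * (l + 1) + ((⟨i, hi⟩ : Fin p) : ℕ) by
        dsimp only; rw [Nat.mul_succ]; omega, periodicExt_mul_add, Nat.zero_add]
      have := (hwindow i hi).1
      simp only [α]
      omega
  rw [Jmap_apply]
  exact (hagree i).trans (by simpa using periodicExt_mul_add q J 0 i)

end Jmap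

/-- `J` is a bijection from `C_{p,m}` onto the set of strictly increasing
`p`-tuples `j_1 < ⋯ < j_p` of positive integers with `j_p - (m+p) < j_1`. -/
theorem Jmap_bijective (p m : ℕ) (hp : 0 < p) :
    Set.BijOn (Jmap (p := p) (m := m)) Set.univ
      {J : Fin p → ℕ | StrictMono J ∧ (∀ i, 1 ≤ J i) ∧
        J ⟨p - 1, by omega⟩ < J ⟨0, hp⟩ + (m + p)} := by
  have : NeZero p := ⟨hp.ne'⟩
  refine ⟨fun x _ => ⟨strictMono_Jmap x, one_le_Jmap x, Jmap_last_lt x⟩,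
    Jmap_injective.injOn, fun J ⟨hJ, hpos, hwrap⟩ => ?_⟩
  obtain ⟨x, hx⟩ := exists_Jmap_eq hJ hpos hwrap
  exact ⟨x, trivial, hx⟩
end

section
/- The bijection J : C_{p,m} → {strictly increasing p-tuples (j_1 < ... < j_p) of positive integers with j_p - (m+p) < j_1} is an order isomorphism, where the target carries the componentwise partial order: α^{(a)} ≤ β^{(b)} in C_{p,m} if and only if J(α^{(a)})_i ≤ J(β^{(b)})_i for all i. -/
def qle {p m : ℕ} (x y : QElt p m) : Prop :=
  x.2 ≤ y.2 ∧ ∀ i j : Fin p, (j : ℕ) = (i : ℕ) + (y.2 - x.2) → x.1.1 i ≤ y.1.1 j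

theorem QRow.le {p m : ℕ} (α : QRow p m) (i : Fin p) : α.1 i ≤ m + p := (α.2.2 i).2

theorem QRow.one_le {p m : ℕ} (α : QRow p m) (i : Fin p) : 1 ≤ α.1 i := (α.2.2 i).1

section PeriodicExtend

variable {p : ℕ} [NeZero p] (N : ℕ)

def periodicExtend (α : Fin p → ℕ) (n : ℕ) : ℕ :=
  n / p * N + α (Fin.ofNat p n)

theorem periodicExtend_mul_add (α : Fin p → ℕ) (l : ℕ) (s : Fin p) :
    periodicExtend N α (p * l + s) = l * N + α s := by
  have hdiv : (p * l + s) / p = l := by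
    rw [Nat.mul_add_div (Nat.pos_of_neZero p), Nat.div_eq_of_lt s.isLt, add_zero]
  have hmod : Fin.ofNat p (p * l + s) = s := by
    ext
    rw [Fin.val_ofNat, Nat.mul_add_mod, Nat.mod_eq_of_lt s.isLt]
  rw [periodicExtend, hdiv, hmod]

theorem periodicExtend_le_of_le {α : Fin p → ℕ} (hα : ∀ i, α i ≤ N) (n : ℕ) :
    periodicExtend N α n ≤ (n / p + 1) * N := by
  rw [periodicExtend, add_one_mul]
  exact Nat.add_le_add_left (hα _) _

theorem lt_periodicExtend_of_pos {α : Fin p → ℕ} (hα : ∀ i, 1 ≤ α i) (n : ℕ) :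
    n / p * N < periodicExtend N α n :=
  Nat.lt_add_of_pos_right (hα _)

theorem periodicExtend_lt_of_lt_mul_of_mul_le {α β : Fin p → ℕ} (hα : ∀ i, α i ≤ N)
    (hβ : ∀ i, 1 ≤ β i) {n n' l : ℕ} (hn : n < p * l) (hn' : p * l ≤ n') :
    periodicExtend N α n < periodicExtend N β n' := by
  have hp := Nat.pos_of_neZero p
  have hl : n / p + 1 ≤ l := (Nat.div_lt_iff_lt_mul hp).2 (by rwa [mul_comm])
  have hl' : l ≤ n' / p := (Nat.le_div_iff_mul_le hp).2 (by rwa [mul_comm])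
  calc periodicExtend N α n ≤ (n / p + 1) * N := periodicExtend_le_of_le N hα n
    _ ≤ n' / p * N := Nat.mul_le_mul_right N (hl.trans hl')
    _ < periodicExtend N β n' := lt_periodicExtend_of_pos N hβ n'

theorem periodicExtend_le_periodicExtend_add {α β : Fin p → ℕ} (hα : ∀ i, α i ≤ N)
    (hβ : ∀ i, 1 ≤ β i) {d : ℕ} (hd : ∀ s t : Fin p, (t : ℕ) = s + d → α s ≤ β t) (n : ℕ) :
    periodicExtend N α n ≤ periodicExtend N β (n + d) := by
  have hdecomp := Nat.div_add_mod n p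
  have hmod : n % p < p := Nat.mod_lt _ (Nat.pos_of_neZero p)
  by_cases hsame : n % p + d < p
  · have hn : n = p * (n / p) + (⟨n % p, hmod⟩ : Fin p) := hdecomp.symm
    have hn' : n + d = p * (n / p) + (⟨n % p + d, hsame⟩ : Fin p) := by simp only; omega
    rw [hn', periodicExtend_mul_add]
    conv_lhs => rw [hn, periodicExtend_mul_add]
    exact Nat.add_le_add_left (hd _ _ rfl) _
  · refine (periodicExtend_lt_of_lt_mul_of_mul_le N hα hβ (l := n / p + 1) ?_ ?_).le <;>
      rw [mul_add_one] <;> omega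

theorem exists_add_eq_mul_add (a : ℕ) (s : Fin p) : ∃ q, ∃ k : Fin p, a + k = p * q + s := by
  have hdecomp := Nat.div_add_mod (a + (p - 1 - s)) p
  have hmod := Nat.mod_lt (a + (p - 1 - s)) (Nat.pos_of_neZero p)
  have hs := s.isLt
  -- `q = ⌈(a - s) / p⌉`
  refine ⟨(a + (p - 1 - s)) / p, ⟨p * ((a + (p - 1 - s)) / p) + s - a, by omega⟩, ?_⟩
  simp only
  omega

theorem exists_periodicExtend_add_lt {α β : Fin p → ℕ} (hα : ∀ i, α i ≤ N)
    (hβ : ∀ i, 1 ≤ β i) {a b : ℕ} (hab : a < b) :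
    ∃ k : Fin p, periodicExtend N α (a + k) < periodicExtend N β (b + k) := by
  have hdecomp := Nat.div_add_mod a p
  have hmod := Nat.mod_lt a (Nat.pos_of_neZero p)
  refine ⟨⟨p - 1 - a % p, by omega⟩,
    periodicExtend_lt_of_lt_mul_of_mul_le N hα hβ (l := a / p + 1) ?_ ?_⟩ <;>
    simp only [mul_add_one] <;> omega

end PeriodicExtend

section Jmap

variable {p m : ℕ} [NeZero p]

theorem Jmap_eq_periodicExtend (x : QElt p m) (i : Fin p) :
    Jmap x i = periodicExtend (m + p) x.1.1 (x.2 + i) := by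
  have hdecomp := Nat.div_add_mod x.2 p
  have hmod : x.2 % p < p := Nat.mod_lt _ (Nat.pos_of_neZero p)
  have hi := i.isLt
  unfold Jmap
  split_ifs with h
  · have e : x.2 + i = p * (x.2 / p) + (⟨x.2 % p + i, by omega⟩ : Fin p) := by simp only; omega
    rw [e, periodicExtend_mul_add]
  · have e : x.2 + i = p * (x.2 / p + 1) + (⟨i - (p - x.2 % p), by omega⟩ : Fin p) := by
      simp only [mul_add_one]; omega
    rw [e, periodicExtend_mul_add]

theorem Jmap_le_of_qle {x y : QElt p m} (h : qle x y) (i : Fin p) : Jmap x i ≤ Jmap y i := by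
  obtain ⟨hab, hshift⟩ := h
  rw [Jmap_eq_periodicExtend, Jmap_eq_periodicExtend,
    show y.2 + i = x.2 + i + (y.2 - x.2) by omega]
  exact periodicExtend_le_periodicExtend_add _ x.1.le y.1.one_le hshift _

theorem qle_of_Jmap_le {x y : QElt p m} (h : ∀ i, Jmap x i ≤ Jmap y i) : qle x y := by
  simp only [Jmap_eq_periodicExtend] at h
  have hab : x.2 ≤ y.2 := by
    by_contra! hba
    obtain ⟨k, hk⟩ := exists_periodicExtend_add_lt _ y.1.le x.1.one_le hba
    exact (h k).not_gt hk
  refine ⟨hab, fun i j hj => ?_⟩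
  obtain ⟨q, k, hk⟩ := exists_add_eq_mul_add x.2 i
  have hblock := h k
  rw [hk, show y.2 + k = p * q + j by omega, periodicExtend_mul_add, periodicExtend_mul_add]
    at hblock
  exact Nat.le_of_add_le_add_left hblock

end Jmap

theorem Jmap_orderIso_general (p m : ℕ) (hp : 0 < p) (x y : QElt p m) :
    qle x y ↔ ∀ i : Fin p, Jmap x i ≤ Jmap y i :=
  haveI : NeZero p := ⟨hp.ne'⟩
  ⟨Jmap_le_of_qle, qle_of_Jmap_le⟩

/-- the bijection `J` is an order isomorphism: `α^{(a)} ≤ β^{(b)}` in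
`C_{p,m}` iff `J(α^{(a)})_i ≤ J(β^{(b)})_i` componentwise. -/
theorem Jmap_orderIso (p m : ℕ) (hp : 0 < p) (hm : 0 < m) (x y : QElt p m) :
    qle x y ↔ ∀ i : Fin p, Jmap x i ≤ Jmap y i :=
  Jmap_orderIso_general p m hp x y
end

section
/- The distributive lattice C^q_{p,m} is graded by the rank function |α^{(a)}| = a(m+p) + Σ_{j=1}^{p}(α_j − j): whenever β^{(b)} is covered by α^{(a)} in C^q_{p,m}, one has |α^{(a)}| = |β^{(b)}| + 1. -/
/-- The rank function `|α^{(a)}| = a(m+p) + Σ_{j=1}^p (α_j − j)`. -/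
def qrank {p : ℕ} (m : ℕ) (x : QElt p m) : ℤ :=
  (x.2 : ℤ) * (m + p) + ∑ i : Fin p, ((x.1.1 i : ℤ) - ((i : ℕ) + 1))

open Finset

theorem StrictMono.apply_add_sub_le {p : ℕ} {f : Fin p → ℕ} (hf : StrictMono f) {i j : Fin p}
    (hij : i ≤ j) : f i + (j - i : ℕ) ≤ f j := by
  have hmaps : Set.MapsTo f (Icc i j) (Icc (f i) (f j)) := fun k hk => by
    rw [coe_Icc, Set.mem_Icc] at hk
    exact mem_Icc.2 ⟨hf.monotone hk.1, hf.monotone hk.2⟩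
  have hcard := card_le_card_of_injOn f hmaps hf.injective.injOn
  rw [Fin.card_Icc, Nat.card_Icc] at hcard
  have : (i : ℕ) ≤ j := hij
  omega

namespace QRow

variable {p m : ℕ}

theorem val_add_one_le (α : QRow p m) (i : Fin p) : (i : ℕ) + 1 ≤ α.1 i := by
  have hstep := α.2.1.apply_add_sub_le (i := ⟨0, i.pos⟩) (j := i) (Nat.zero_le _)
  have h0 := (α.2.2 ⟨0, i.pos⟩).1
  simp only [Nat.sub_zero] at hstep
  omega

def CanBump (α : QRow p m) (u : Fin p) : Prop :=
  α.1 u < m + p ∧ ∀ k, u < k → α.1 u + 1 < α.1 k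

def bump (α : QRow p m) (u : Fin p) (h : α.CanBump u) : QRow p m :=
  ⟨Function.update α.1 u (α.1 u + 1), by
    intro j k hjk
    rcases eq_or_ne k u with rfl | hk
    · simpa [hjk.ne] using (α.2.1 hjk).trans (Nat.lt_succ_self _)
    · rcases eq_or_ne j u with rfl | hj
      · simpa [hk] using h.2 k hjk
      · simpa [hj, hk] using α.2.1 hjk, by
    intro j
    rcases eq_or_ne j u with rfl | hj
    · simpa using h.1
    · simpa [hj] using α.2.2 j⟩

theorem sum_bump (α : QRow p m) (u : Fin p) (h : α.CanBump u) :
    ∑ i, (α.bump u h).1 i = ∑ i, α.1 i + 1 := by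
  rw [bump, sum_update_of_mem (mem_univ u),
    sum_eq_add_sum_sdiff_singleton_of_mem (mem_univ u) α.1]
  ring

variable {n : ℕ}

def shift (α : QRow (n + 1) m) (h : 2 ≤ α.1 0) : QRow (n + 1) m :=
  ⟨Fin.cons 1 (Fin.init α.1),
    Fin.strictMono_cons.2
      ⟨fun j => h.trans_lt' (by simp) |>.trans_le (α.2.1.monotone (Fin.zero_le _)),
        α.2.1.comp Fin.strictMono_castSucc⟩,
    Fin.cases (by simp; omega) fun i => α.2.2 _⟩

theorem sum_shift_add_last (α : QRow (n + 1) m) (h : 2 ≤ α.1 0) :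
    ∑ i, (α.shift h).1 i + α.1 (Fin.last n) = ∑ i, α.1 i + 1 := by
  rw [shift, Fin.sum_univ_succ, Fin.sum_univ_castSucc α.1]
  simp only [Fin.cons_zero, Fin.cons_succ, Fin.init]
  ring

end QRow

section

variable {p m n : ℕ}

theorem qrank_mk (α : QRow p m) (a : ℕ) :
    qrank m (α, a) = a * (m + p) + (∑ i, α.1 i : ℕ) - ∑ i : Fin p, ((i : ℕ) + 1 : ℤ) := by
  unfold qrank
  rw [sum_sub_distrib, Nat.cast_sum]
  ring

theorem qle_bump (α : QRow p m) (u : Fin p) (h : α.CanBump u) (a : ℕ) :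
    qle (α, a) (α.bump u h, a) := by
  refine ⟨le_rfl, fun i j hij => ?_⟩
  obtain rfl : i = j := Fin.ext (by simpa using hij.symm)
  rcases eq_or_ne i u with rfl | hi
  · simp [QRow.bump]
  · simp [QRow.bump, hi]

theorem bump_qle {α : QRow p m} {u : Fin p} {h : α.CanBump u} {a : ℕ} {y : QElt p m}
    (hxy : qle (α, a) y) (hu : ∀ j : Fin p, (j : ℕ) = u + (y.2 - a) → α.1 u + 1 ≤ y.1.1 j) :
    qle (α.bump u h, a) y := by
  refine ⟨hxy.1, fun i j hij => ?_⟩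
  rcases eq_or_ne i u with rfl | hi
  · simpa [QRow.bump] using hu j hij
  · simpa [QRow.bump, hi] using hxy.2 i j hij

theorem qrank_bump (α : QRow p m) (u : Fin p) (h : α.CanBump u) (a : ℕ) :
    qrank m (α.bump u h, a) = qrank m (α, a) + 1 := by
  rw [qrank_mk, qrank_mk]
  simp only [QRow.sum_bump]
  push_cast
  ring

theorem qle_shift (α : QRow (n + 1) m) (h : 2 ≤ α.1 0) (a : ℕ) :
    qle (α, a) (α.shift h, a + 1) := by
  refine ⟨a.le_succ, fun i j hij => ?_⟩
  induction j using Fin.cases with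
  | zero => simp at hij
  | succ j =>
    obtain rfl : i = j.castSucc := Fin.ext (by simp at hij ⊢; omega)
    simp [QRow.shift, Fin.init]

theorem shift_qle {α : QRow (n + 1) m} {h : 2 ≤ α.1 0} {a : ℕ} {y : QElt (n + 1) m}
    (hxy : qle (α, a) y) (hlt : a < y.2) : qle (α.shift h, a + 1) y := by
  refine ⟨hlt, fun i j hij => ?_⟩
  induction i using Fin.cases with
  | zero => simpa [QRow.shift] using (y.1.2.2 j).1
  | succ i => simpa [QRow.shift, Fin.init] using hxy.2 i.castSucc j (by simp at hij ⊢; omega)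

theorem qrank_shift (α : QRow (n + 1) m) (h : 2 ≤ α.1 0) (a : ℕ) :
    qrank m (α.shift h, a + 1) = qrank m (α, a) + (m + (n + 1) + 1) - α.1 (Fin.last n) := by
  have hsum := congrArg (Nat.cast : ℕ → ℤ) (α.sum_shift_add_last h)
  push_cast at hsum
  rw [qrank_mk, qrank_mk]
  push_cast
  linear_combination hsum

theorem exists_qle_qrank_succ_of_level_eq {α β : QRow p m} {a : ℕ}
    (hxy : qle (α, a) (β, a)) (hne : α ≠ β) :
    ∃ z, qle (α, a) z ∧ qle z (β, a) ∧ qrank m z = qrank m (α, a) + 1 := by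
  have hle : ∀ i, α.1 i ≤ β.1 i := fun i => hxy.2 i i (by simp)
  obtain ⟨u, hu⟩ : ∃ u, α.1 u < β.1 u := by
    by_contra! h
    exact hne (Subtype.ext (funext fun i => (hle i).antisymm (h i)))
  obtain ⟨u, hu, hmax⟩ := (Set.toFinite {i | α.1 i < β.1 i}).exists_maximal ⟨u, hu⟩
  have hu : α.1 u < β.1 u := hu
  have heq : ∀ k, u < k → α.1 k = β.1 k :=
    fun k huk => (hle k).eq_of_not_lt fun hk => (hmax hk huk.le).not_gt huk
  have hbump : α.CanBump u := by
    refine ⟨hu.trans_le (β.2.2 u).2, fun k huk => ?_⟩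
    have := β.2.1 huk
    rw [heq k huk]
    omega
  refine ⟨_, qle_bump α u hbump a, bump_qle hxy fun j hj => ?_, qrank_bump α u hbump a⟩
  obtain rfl : j = u := Fin.ext (by simpa using hj)
  exact hu

theorem exists_qle_qrank_succ_of_level_lt (hm : 0 < m) {α : QRow (n + 1) m} {a : ℕ}
    {y : QElt (n + 1) m} (hxy : qle (α, a) y) (hlt : a < y.2) :
    ∃ z, qle (α, a) z ∧ qle z y ∧ qrank m z = qrank m (α, a) + 1 := by
  by_cases hlast : α.1 (Fin.last n) < m + (n + 1)
  · have hbump : α.CanBump (Fin.last n) :=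
      ⟨hlast, fun k hk => absurd hk (Fin.le_last k).not_gt⟩
    refine ⟨_, qle_bump α _ hbump a, bump_qle hxy fun j hj => ?_, qrank_bump α _ hbump a⟩
    have := j.2
    simp only [Fin.val_last] at hj
    omega
  have hlast : α.1 (Fin.last n) = m + (n + 1) := (α.2.2 _).2.antisymm (not_lt.1 hlast)
  by_cases h0 : 2 ≤ α.1 0
  · refine ⟨_, qle_shift α h0 a, shift_qle hxy hlt, ?_⟩
    rw [qrank_shift, hlast]
    push_cast
    ring
  obtain ⟨k, hk, hmax⟩ := (Set.toFinite {i : Fin (n + 1) | α.1 i = i + 1}).exists_maximal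
    ⟨0, by have := (α.2.2 0).1; simp only [Set.mem_ofPred_eq, Fin.val_zero]; omega⟩
  have hk : α.1 k = k + 1 := hk
  have hgap : ∀ j, k < j → (j : ℕ) + 2 ≤ α.1 j := fun j hkj => by
    have hstep := α.2.1.apply_add_sub_le hkj.le
    have hne : α.1 j ≠ j + 1 := fun h => (hmax h hkj.le).not_gt hkj
    have : (k : ℕ) < j := hkj
    omega
  have hklast : k < Fin.last n := (Fin.le_last k).lt_of_ne fun h => by
    rw [h, hlast, Fin.val_last] at hk
    omega
  have hbump : α.CanBump k := by
    refine ⟨?_, fun j hkj => ?_⟩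
    · have := hgap _ hklast
      omega
    · have := hgap j hkj
      have : (k : ℕ) < j := hkj
      omega
  refine ⟨_, qle_bump α k hbump a, bump_qle hxy fun j hj => ?_, qrank_bump α k hbump a⟩
  have := y.1.val_add_one_le j
  omega

theorem exists_qle_qrank_succ (hm : 0 < m) {x y : QElt (n + 1) m} (hxy : qle x y) (hne : x ≠ y) :
    ∃ z, qle x z ∧ qle z y ∧ qrank m z = qrank m x + 1 := by
  obtain ⟨α, a⟩ := x
  rcases hxy.1.eq_or_lt with hab | hab
  · obtain ⟨β, b⟩ := y
    obtain rfl : a = b := hab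
    exact exists_qle_qrank_succ_of_level_eq hxy fun h => hne (h ▸ rfl)
  · exact exists_qle_qrank_succ_of_level_lt hm hxy hab

end

theorem truncation_graded_general (p m q : ℕ) (hp : 0 < p) (hm : 0 < m)
    (x y : QElt p m) (hy : y.2 ≤ q)
    (hlt : qle x y ∧ x ≠ y)
    (hcov : ∀ z : QElt p m, z.2 ≤ q → qle x z → qle z y → z = x ∨ z = y) :
    qrank m y = qrank m x + 1 := by
  obtain ⟨n, rfl⟩ := Nat.exists_eq_add_one_of_ne_zero hp.ne'
  obtain ⟨z, hxz, hzy, hz⟩ := exists_qle_qrank_succ hm hlt.1 hlt.2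
  rcases hcov z (hzy.1.trans hy) hxz hzy with rfl | rfl
  · omega
  · exact hz

/-- `C^q_{p,m}` is graded by the rank function: whenever `β^{(b)}` is
covered by `α^{(a)}` in `C^q_{p,m}`, the ranks differ by exactly `1`. -/
theorem truncation_graded (p m q : ℕ) (hp : 0 < p) (hm : 0 < m)
    (x y : QElt p m) (hx : x.2 ≤ q) (hy : y.2 ≤ q)
    (hlt : qle x y ∧ x ≠ y)
    (hcov : ∀ z : QElt p m, z.2 ≤ q → qle x z → qle z y → z = x ∨ z = y) :
    qrank m y = qrank m x + 1 :=
  truncation_graded_general p m q hp hm x y hy hlt hcov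
end

section
/- With the term order ≺ on k[X] given by degree reverse lexicographic order refining the variable order x_{i,j}^{(l)} < x_{i',j'}^{(l')} iff (l,i,j) < (l',i',j') lexicographically, the initial monomial of φ(α^{(a)}) — the coefficient of t^a in the α-th maximal minor of M(t) — equals x_{r+1,α_p}^{(l)} x_{r+2,α_{p-1}}^{(l)} ⋯ x_{p,α_{r+1}}^{(l)} · x_{1,α_r}^{(l+1)} x_{2,α_{r-1}}^{(l+1)} ⋯ x_{r,α_1}^{(l+1)}, where a = pl + r with 0 ≤ r < p. -/
open MvPolynomial

noncomputable def coeffMinor (k : Type) [Field k] (n : ℕ) {p : ℕ}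
    (α : Fin p → ℕ) (a : ℕ) : MvPolynomial (ℕ × ℕ × ℕ) k :=
  Polynomial.coeff
    (Matrix.det (Matrix.of fun i j : Fin p =>
      ∑ l ∈ Finset.range (n + 1),
        Polynomial.C (X ((i : ℕ), α j, l) : MvPolynomial (ℕ × ℕ × ℕ) k) *
          Polynomial.X ^ l)) a

/-- Rank of the variable `x_{i,j}^{(l)}` (encoded `(i,j,l)`, all 0-based) in the
variable ordering: lexicographic in `(l, i, j)`. -/
def varRank (p m : ℕ) (v : ℕ × ℕ × ℕ) : ℕ :=
  v.2.2 * (p * (m + p)) + v.1 * (m + p) + v.2.1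

/-- `d` is smaller than `e` in the degree reverse lexicographic order: either the total
degree of `d` is smaller, or the degrees agree and at the smallest variable (in the
variable order) where `d` and `e` differ, `d` has the larger exponent. -/
def drlLower (p m : ℕ) (d e : (ℕ × ℕ × ℕ) →₀ ℕ) : Prop :=
  (d.sum fun _ x => x) < (e.sum fun _ x => x) ∨
    ((d.sum fun _ x => x) = (e.sum fun _ x => x) ∧
      ∃ v, e v < d v ∧ ∀ w, varRank p m w < varRank p m v → d w = e w)

/-- The exponent vector of the claimed initial monomial
`x_{r+1,α_p}^{(l)} ⋯ x_{p,α_{r+1}}^{(l)} · x_{1,α_r}^{(l+1)} ⋯ x_{r,α_1}^{(l+1)}`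
where `a = pl + r`, `0 ≤ r < p` (all indices 0-based in the encoding). -/
noncomputable def leadExp {p : ℕ} (α : Fin p → ℕ) (a : ℕ) : (ℕ × ℕ × ℕ) →₀ ℕ :=
  ∑ t : Fin p,
    if (t : ℕ) < p - a % p then
      Finsupp.single ((a % p + t : ℕ), α ⟨p - 1 - t, by have := t.isLt; omega⟩, a / p) 1
    else
      Finsupp.single (((t : ℕ) - (p - a % p)),
        α ⟨a % p - 1 - ((t : ℕ) - (p - a % p)), by have := t.isLt; have := Nat.mod_lt a t.pos; omega⟩, a / p + 1) 1

/-!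
Expanding the determinant, the monomials of `φ(α^{(a)})` are the products
`∏ᵢ x_{i, α_{σ i}}^{(g i)}` over permutations `σ` and degree choices `g` with `∑ g i = a`;
distinct pairs `(σ, g)` give distinct monomials, so nothing cancels. Put the variable
`x_{i,j}^{(l)}` in slot `l p + i`: the variable order is lexicographic in (slot, column), and the
claimed initial monomial fills the consecutive slots `a, …, a + p - 1` with the columns
`α_p, …, α_1`.

Let `v` be the smallest variable at which another monomial `d` differs from the claimed one, and
suppose `v` is a claimed variable. Then `d` contains the claimed variables below `v`, and its
other variables lie above `v`, hence each has degree at least that of the claimed variable in its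
row. As the degrees of both monomials sum to `a`, they coincide; so `d` has a variable in the slot
of `v` with a larger column than `v`, but that column is already used below `v`.
-/

open Finset Function

theorem Nat.mul_add_lt_mul_add_iff {b c c' x x' : ℕ} (hx : x < b) (hx' : x' < b) :
    c * b + x < c' * b + x' ↔ c < c' ∨ c = c' ∧ x < x' := by
  constructor
  · intro h
    rcases lt_trichotomy c c' with hc | rfl | hc
    · exact Or.inl hc
    · exact Or.inr ⟨rfl, by omega⟩
    · nlinarith [Nat.mul_le_mul_right b hc]
  · rintro (hc | ⟨rfl, h⟩)
    · nlinarith [Nat.mul_le_mul_right b hc]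
    · omega

theorem Nat.mul_add_eq_mul_add_iff {b c c' x x' : ℕ} (hx : x < b) (hx' : x' < b) :
    c * b + x = c' * b + x' ↔ c = c' ∧ x = x' := by
  refine ⟨fun h => ?_, fun ⟨hc, hx⟩ => hc ▸ hx ▸ rfl⟩
  have h₁ := (Nat.mul_add_lt_mul_add_iff hx hx').not.1 h.not_lt
  have h₂ := (Nat.mul_add_lt_mul_add_iff hx' hx).not.1 h.not_gt
  omega

theorem Nat.sum_range_add_div (a : ℕ) {p : ℕ} (hp : 0 < p) :
    ∑ t ∈ range p, (a + t) / p = a := by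
  induction a with
  | zero => exact Finset.sum_eq_zero fun t ht => Nat.div_eq_of_lt (by simpa using ht)
  | succ a ih =>
    have hshift := Finset.sum_range_succ' (fun t => (a + t) / p) p
    rw [Finset.sum_range_succ, ih, Nat.add_div_right a hp, add_zero] at hshift
    have hcomm : ∑ t ∈ range p, (a + 1 + t) / p = ∑ t ∈ range p, (a + (t + 1)) / p :=
      Finset.sum_congr rfl fun t _ => by rw [add_assoc, add_comm 1 t]
    omega

theorem Fin.sum_univ_add_div {p : ℕ} [NeZero p] (a : ℕ) : ∑ t : Fin p, (a + t) / p = a :=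
  (Fin.sum_univ_eq_sum_range (fun t => (a + t) / p) p).trans
    (Nat.sum_range_add_div a (NeZero.pos p))

theorem varRank_eq (p m i j c : ℕ) : varRank p m (i, j, c) = (c * p + i) * (m + p) + j := by
  simp only [varRank]
  ring

theorem eq_of_varRank_eq {p m i i' j j' c c' : ℕ} (hi : i < p) (hi' : i' < p) (hj : j < m + p)
    (hj' : j' < m + p) (h : varRank p m (i, j, c) = varRank p m (i', j', c')) :
    (i, j, c) = (i', j', c') := by
  rw [varRank_eq, varRank_eq, Nat.mul_add_eq_mul_add_iff hj hj',
    Nat.mul_add_eq_mul_add_iff hi hi'] at h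
  obtain ⟨⟨rfl, rfl⟩, rfl⟩ := h
  rfl

section ProdXExp

variable {ι σ : Type*} [Fintype ι]

noncomputable def prodXExp (v : ι → σ) : σ →₀ ℕ :=
  ∑ t, Finsupp.single (v t) 1

theorem prod_X_eq_monomial_prodXExp (R : Type*) [CommSemiring R] (v : ι → σ) :
    ∏ t, (X (v t) : MvPolynomial σ R) = monomial (prodXExp v) 1 := by
  rw [prodXExp, monomial_sum_one]
  rfl

theorem coe_prodXExp_of_injective {v : ι → σ} (hv : Injective v) :
    ⇑(prodXExp v) = (Set.range v).indicator 1 := by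
  classical
  ext w
  simp only [prodXExp, Finsupp.finsetSum_apply, Finsupp.single_apply]
  by_cases hw : w ∈ Set.range v
  · obtain ⟨t, rfl⟩ := hw
    rw [Finset.sum_eq_single t (fun s _ hs => if_neg (hv.ne hs)) (by simp), if_pos rfl,
      Set.indicator_of_mem (Set.mem_range_self t), Pi.one_apply]
  · rw [Set.indicator_of_notMem hw]
    exact Finset.sum_eq_zero fun t _ => if_neg fun h => hw ⟨t, h⟩

theorem prodXExp_eq_of_range_eq {v v' : ι → σ} (hv : Injective v) (hv' : Injective v')
    (h : Set.range v = Set.range v') : prodXExp v = prodXExp v' :=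
  DFunLike.coe_injective (by rw [coe_prodXExp_of_injective hv, coe_prodXExp_of_injective hv', h])

theorem degree_prodXExp (v : ι → σ) : (prodXExp v).degree = Fintype.card ι := by
  simp [prodXExp, map_sum]

theorem prodXExp_comp_equiv (v : ι → σ) (e : ι ≃ ι) : prodXExp (v ∘ e) = prodXExp v :=
  e.sum_comp fun t => Finsupp.single (v t) 1

end ProdXExp

section Expansion

variable (k : Type) [Field k] (n : ℕ) {p : ℕ} (α : Fin p → ℕ) (a : ℕ)

def rowVar (σ : Equiv.Perm (Fin p)) (g : Fin p → ℕ) (i : Fin p) : ℕ × ℕ × ℕ :=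
  ((i : ℕ), α (σ i), g i)

theorem rowVar_injective (σ : Equiv.Perm (Fin p)) (g : Fin p → ℕ) :
    Injective (rowVar α σ g) :=
  fun _ _ h => Fin.ext (congrArg Prod.fst h)

theorem mk_mem_range_rowVar_iff {σ : Equiv.Perm (Fin p)} {g : Fin p → ℕ} {i : Fin p}
    {j c : ℕ} :
    ((i : ℕ), j, c) ∈ Set.range (rowVar α σ g) ↔ j = α (σ i) ∧ c = g i := by
  constructor
  · rintro ⟨i', h⟩
    simp only [rowVar, Prod.mk.injEq] at h
    obtain ⟨hi, rfl, rfl⟩ := h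
    obtain rfl : i' = i := Fin.ext hi
    exact ⟨rfl, rfl⟩
  · rintro ⟨rfl, rfl⟩
    exact ⟨i, rfl⟩

variable {α} in
theorem eq_of_prodXExp_rowVar_eq (hα : Injective α) {σ σ' : Equiv.Perm (Fin p)}
    {g g' : Fin p → ℕ} (h : prodXExp (rowVar α σ g) = prodXExp (rowVar α σ' g')) :
    σ = σ' ∧ g = g' := by
  have hrange : Set.range (rowVar α σ g) = Set.range (rowVar α σ' g') := by
    apply Set.indicator_one_inj (M₀ := ℕ)
    rw [← coe_prodXExp_of_injective (rowVar_injective α σ g),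
      ← coe_prodXExp_of_injective (rowVar_injective α σ' g'), h]
  have hi (i : Fin p) : α (σ i) = α (σ' i) ∧ g i = g' i :=
    (mk_mem_range_rowVar_iff α).1 (hrange ▸ Set.mem_range_self i)
  exact ⟨Equiv.ext fun i => hα (hi i).1, funext fun i => (hi i).2⟩

def levelChoices : Finset (Fin p → ℕ) :=
  {g ∈ Fintype.piFinset fun _ => range (n + 1) | ∑ i, g i = a}

theorem coeffMinor_eq_sum :
    coeffMinor k n α a = ∑ σ : Equiv.Perm (Fin p), ∑ g ∈ levelChoices n a,
      monomial (prodXExp (rowVar α σ g)) ((Equiv.Perm.sign σ : ℤ) : k) := by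
  classical
  rw [coeffMinor, ← Matrix.det_transpose, Matrix.det_apply, Polynomial.finsetSum_coeff]
  refine Finset.sum_congr rfl fun σ _ => ?_
  simp only [Matrix.transpose_apply, Matrix.of_apply, Finset.prod_univ_sum, Finset.prod_mul_distrib,
    ← map_prod, Finset.prod_pow_eq_pow_sum, Polynomial.coeff_smul, Polynomial.finsetSum_coeff,
    Polynomial.coeff_C_mul_X_pow, prod_X_eq_monomial_prodXExp]
  rw [levelChoices, Finset.sum_filter, Finset.smul_sum]
  refine Finset.sum_congr rfl fun g _ => ?_
  simp only [eq_comm (a := a)]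
  split_ifs
  · rw [Units.smul_def, smul_monomial, zsmul_one]
    rfl
  · exact smul_zero _

variable {α} in
theorem coeff_prodXExp_rowVar_coeffMinor (hα : Injective α) (σ : Equiv.Perm (Fin p))
    {g : Fin p → ℕ} (hg : g ∈ levelChoices n a) :
    coeff (prodXExp (rowVar α σ g)) (coeffMinor k n α a) = ((Equiv.Perm.sign σ : ℤ) : k) := by
  classical
  rw [coeffMinor_eq_sum, coeff_sum, Finset.sum_eq_single σ, coeff_sum,
    Finset.sum_eq_single_of_mem g hg, coeff_monomial, if_pos rfl]
  · intro g' _ hg'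
    rw [coeff_monomial, if_neg fun h => hg' (eq_of_prodXExp_rowVar_eq hα h).2]
  · intro σ' _ hσ'
    rw [coeff_sum]
    refine Finset.sum_eq_zero fun g' _ => ?_
    rw [coeff_monomial, if_neg fun h => hσ' (eq_of_prodXExp_rowVar_eq hα h).1]
  · simp

theorem exists_prodXExp_rowVar_eq_of_mem_support {d : (ℕ × ℕ × ℕ) →₀ ℕ}
    (hd : d ∈ (coeffMinor k n α a).support) :
    ∃ σ g, ∑ i, g i = a ∧ prodXExp (rowVar α σ g) = d := by
  classical
  rw [mem_support_iff, coeffMinor_eq_sum, coeff_sum] at hd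
  obtain ⟨σ, -, hσ⟩ := Finset.exists_ne_zero_of_sum_ne_zero hd
  rw [coeff_sum] at hσ
  obtain ⟨g, hg, hne⟩ := Finset.exists_ne_zero_of_sum_ne_zero hσ
  rw [coeff_monomial] at hne
  exact ⟨σ, g, (Finset.mem_filter.1 hg).2, of_not_not fun h => hne (if_neg h)⟩

end Expansion

section Lead

variable {p : ℕ} [NeZero p] (α : Fin p → ℕ) (a : ℕ)

def leadRow : Equiv.Perm (Fin p) :=
  Equiv.addRight (Fin.ofNat p a)

theorem leadRow_val (t : Fin p) : (leadRow a t : ℕ) = (a + t) % p := by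
  simp [leadRow, Fin.val_add, add_comm]

/-- The variables of `leadExp α a`, listed in increasing order. -/
def leadVar (t : Fin p) : ℕ × ℕ × ℕ :=
  ((leadRow a t : ℕ), α t.rev, (a + t) / p)

theorem leadExp_eq_prodXExp_leadVar : leadExp α a = prodXExp (leadVar α a) := by
  have hp := NeZero.pos p
  have hr := Nat.mod_lt a hp
  have hdm := Nat.div_add_mod' a p
  refine Finset.sum_congr rfl fun t _ => ?_
  have ht := t.isLt
  have hdiv {c i : ℕ} (hi : i < p) (h : i + p * c = a + t) :
      (a + t) / p = c ∧ (a + t) % p = i :=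
    (Nat.div_mod_unique hp).2 ⟨h, hi⟩
  simp only [leadVar, leadRow_val]
  split_ifs with h
  · obtain ⟨hl, hi⟩ := hdiv (c := a / p) (i := a % p + t) (by omega) (by rw [mul_comm]; omega)
    rw [hl, hi]
    congr 3
    exact congrArg α (Fin.ext (by simp only [Fin.val_rev]; omega))
  · obtain ⟨hl, hi⟩ := hdiv (c := a / p + 1) (i := t - (p - a % p)) (by omega)
      (by rw [mul_add, mul_comm]; omega)
    rw [hl, hi]
    congr 3
    exact congrArg α (Fin.ext (by simp only [Fin.val_rev]; omega))

theorem leadVar_injective : Injective (leadVar α a) :=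
  fun _ _ h => (leadRow a).injective (Fin.ext (congrArg Prod.fst h))

theorem varRank_leadVar (m : ℕ) (t : Fin p) :
    varRank p m (leadVar α a t) = (a + t) * (m + p) + α t.rev := by
  rw [leadVar, varRank_eq, leadRow_val, Nat.div_add_mod']

theorem strictMono_varRank_leadVar {m : ℕ} (hbd : ∀ i, α i < m + p) :
    StrictMono fun t => varRank p m (leadVar α a t) := by
  intro t t' h
  simp only [varRank_leadVar]
  exact (Nat.mul_add_lt_mul_add_iff (hbd _) (hbd _)).2 (Or.inl (by simpa using h))

variable {α a} in
theorem div_le_of_varRank_leadVar_lt {m : ℕ} (hbd : ∀ i, α i < m + p) {t₀ t : Fin p}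
    {j c : ℕ} (hj : j < m + p)
    (h : varRank p m (leadVar α a t₀) < varRank p m ((leadRow a t : ℕ), j, c)) :
    (a + t) / p ≤ c := by
  rw [varRank_leadVar, varRank_eq, leadRow_val, Nat.mul_add_lt_mul_add_iff (hbd _) hj] at h
  have hslot : a + t₀ ≤ c * p + (a + t) % p := by omega
  have hdm := Nat.div_add_mod' (a + t) p
  by_contra! hc
  nlinarith [Nat.mul_le_mul_right p hc, t.isLt]

theorem leadVar_eq_rowVar_comp :
    leadVar α a =
      rowVar α ((leadRow a).symm.trans Fin.revPerm) (fun i => (a + (leadRow a).symm i) / p) ∘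
        leadRow a := by
  funext t
  simp [leadVar, rowVar]

theorem add_leadRow_symm_div_mem_levelChoices {n : ℕ} (ha : a ≤ n * p) :
    (fun i : Fin p => (a + (leadRow a).symm i) / p) ∈ levelChoices n a := by
  simp only [levelChoices, Finset.mem_filter, Fintype.mem_piFinset, Finset.mem_range]
  refine ⟨fun i => ?_, ?_⟩
  · have := ((leadRow a).symm i).isLt
    rw [Nat.div_lt_iff_lt_mul (NeZero.pos p), add_mul, one_mul]
    omega
  · rw [Equiv.sum_comp (leadRow a).symm fun t => (a + t) / p, Fin.sum_univ_add_div]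

end Lead

section InitialMonomial

variable {p m : ℕ} [NeZero p] {α : Fin p → ℕ} {a : ℕ} {σ : Equiv.Perm (Fin p)}
  {g : Fin p → ℕ}

def AgreeBelow (p m : ℕ) (D L : Set (ℕ × ℕ × ℕ)) (v : ℕ × ℕ × ℕ) : Prop :=
  ∀ w, varRank p m w < varRank p m v → (w ∈ D ↔ w ∈ L)

theorem leadVar_mem_range_rowVar_iff (hα : Injective α) (t : Fin p) :
    leadVar α a t ∈ Set.range (rowVar α σ g) ↔
      σ (leadRow a t) = t.rev ∧ g (leadRow a t) = (a + t) / p := by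
  rw [leadVar, mk_mem_range_rowVar_iff, hα.eq_iff, eq_comm, eq_comm (a := (a + t) / p)]

theorem eq_leadVar_or_varRank_lt_of_agreeBelow (hbd : ∀ i, α i < m + p) {t₀ t : Fin p}
    (ht : t₀ ≤ t)
    (hbelow : AgreeBelow p m (Set.range (rowVar α σ g)) (Set.range (leadVar α a))
      (leadVar α a t₀)) :
    rowVar α σ g (leadRow a t) = leadVar α a t₀ ∨
      varRank p m (leadVar α a t₀) < varRank p m (rowVar α σ g (leadRow a t)) := by
  rcases lt_trichotomy (varRank p m (rowVar α σ g (leadRow a t)))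
    (varRank p m (leadVar α a t₀)) with hlt | heq | hgt
  · obtain ⟨t', ht'⟩ := (hbelow _ hlt).1 (Set.mem_range_self _)
    obtain rfl : t' = t := (leadRow a).injective (Fin.ext (congrArg Prod.fst ht'))
    rw [← ht'] at hlt
    exact absurd ((strictMono_varRank_leadVar α a hbd).lt_iff_lt.1 hlt) ht.not_gt
  · exact Or.inl (eq_of_varRank_eq (Fin.isLt _) (Fin.isLt _) (hbd _) (hbd _) heq)
  · exact Or.inr hgt

theorem leadVar_mem_range_rowVar_of_agreeBelow (hα : StrictMono α) (hbd : ∀ i, α i < m + p)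
    (hg : ∑ i, g i = a) (t₀ : Fin p)
    (hbelow : AgreeBelow p m (Set.range (rowVar α σ g)) (Set.range (leadVar α a))
      (leadVar α a t₀)) :
    leadVar α a t₀ ∈ Set.range (rowVar α σ g) := by
  have hfst (t : Fin p) (ht : t < t₀) :
      σ (leadRow a t) = t.rev ∧ g (leadRow a t) = (a + t) / p :=
    (leadVar_mem_range_rowVar_iff hα.injective t).1
      ((hbelow _ (strictMono_varRank_leadVar α a hbd ht)).2 (Set.mem_range_self t))
  have hle (t : Fin p) : (a + t) / p ≤ g (leadRow a t) := by
    rcases lt_or_ge t t₀ with ht | ht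
    · exact (hfst t ht).2.ge
    rcases eq_leadVar_or_varRank_lt_of_agreeBelow hbd ht hbelow with h | h
    · simp only [rowVar, leadVar, Prod.mk.injEq] at h
      obtain rfl : t = t₀ := (leadRow a).injective (Fin.ext h.1)
      exact h.2.2.ge
    · exact div_le_of_varRank_leadVar_lt hbd (hbd _) h
  have hsum : ∑ t : Fin p, (a + t) / p = ∑ t, g (leadRow a t) := by
    rw [Fin.sum_univ_add_div, Equiv.sum_comp (leadRow a) g, hg]
  have hlevel (t : Fin p) : g (leadRow a t) = (a + t) / p :=
    ((Finset.sum_eq_sum_iff_of_le fun t _ => hle t).1 hsum t (Finset.mem_univ t)).symm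
  rw [leadVar_mem_range_rowVar_iff hα.injective]
  refine ⟨?_, hlevel t₀⟩
  rcases eq_leadVar_or_varRank_lt_of_agreeBelow hbd le_rfl hbelow with h | h
  · simp only [rowVar, leadVar, Prod.mk.injEq] at h
    exact hα.injective h.2.1
  -- otherwise row `leadRow a t₀` uses a column to the right of `α t₀.rev`, already taken
  rw [rowVar, hlevel, varRank_leadVar, varRank_eq, leadRow_val, Nat.div_add_mod',
    Nat.add_lt_add_iff_left, hα.lt_iff_lt] at h
  have ht' : (σ (leadRow a t₀)).rev < t₀ := by rwa [← Fin.rev_lt_rev, Fin.rev_rev]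
  have hσ := (hfst _ ht').1
  rw [Fin.rev_rev] at hσ
  exact absurd ((leadRow a).injective (σ.injective hσ)) ht'.ne

theorem drlLower_prodXExp_rowVar_leadExp (hα : StrictMono α) (hbd : ∀ i, α i < m + p)
    (hg : ∑ i, g i = a) (hne : prodXExp (rowVar α σ g) ≠ leadExp α a) :
    drlLower p m (prodXExp (rowVar α σ g)) (leadExp α a) := by
  rw [leadExp_eq_prodXExp_leadVar] at hne ⊢
  set D := Set.range (rowVar α σ g)
  set L := Set.range (leadVar α a)
  have hD := coe_prodXExp_of_injective (rowVar_injective α σ g)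
  have hL := coe_prodXExp_of_injective (leadVar_injective α a)
  have hDL : {v | ¬(v ∈ D ↔ v ∈ L)}.Nonempty := not_forall.1 fun h =>
    hne (prodXExp_eq_of_range_eq (rowVar_injective α σ g) (leadVar_injective α a) (Set.ext h))
  obtain ⟨v, hv, hmin⟩ := (wellFounded_lt.onFun (f := varRank p m)).has_min _ hDL
  have hbelow : AgreeBelow p m D L v := fun w hw => not_not.1 fun h => hmin w h hw
  have hvD : v ∈ D := by
    by_contra hvD
    obtain ⟨t₀, rfl⟩ : v ∈ L := by_contra fun hvL => hv (iff_of_false hvD hvL)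
    exact hvD (leadVar_mem_range_rowVar_of_agreeBelow hα hbd hg t₀ hbelow)
  have hvL : v ∉ L := fun h => hv (iff_of_true hvD h)
  refine Or.inr ⟨?_, v, ?_, fun w hw => ?_⟩
  · change Finsupp.degree _ = Finsupp.degree _
    rw [degree_prodXExp, degree_prodXExp]
  · rw [hD, hL, Set.indicator_of_mem hvD, Set.indicator_of_notMem hvL]
    exact Nat.zero_lt_one
  · rw [hD, hL]
    by_cases hw' : w ∈ D
    · rw [Set.indicator_of_mem hw', Set.indicator_of_mem ((hbelow w hw).1 hw')]
    · rw [Set.indicator_of_notMem hw', Set.indicator_of_notMem (mt (hbelow w hw).2 hw')]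

end InitialMonomial

theorem initial_monomial_of_coeffMinor_general (k : Type) [Field k] (p m n : ℕ)
    (hp : 0 < p)
    (α : Fin p → ℕ) (hα : StrictMono α) (hbd : ∀ i, α i < m + p)
    (a : ℕ) (ha : a ≤ n * p) :
    MvPolynomial.coeff (leadExp α a) (coeffMinor k n α a) ≠ 0 ∧
    ∀ d ∈ (coeffMinor k n α a).support, d ≠ leadExp α a →
      drlLower p m d (leadExp α a) := by
  have : NeZero p := ⟨hp.ne'⟩
  refine ⟨?_, fun d hd hne => ?_⟩
  · rw [leadExp_eq_prodXExp_leadVar, leadVar_eq_rowVar_comp, prodXExp_comp_equiv,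
      coeff_prodXExp_rowVar_coeffMinor k n a hα.injective _
        (add_leadRow_symm_div_mem_levelChoices a ha)]
    exact ((Equiv.Perm.sign _).isUnit.map (Int.castRingHom k)).ne_zero
  · obtain ⟨σ, g, hg, rfl⟩ := exists_prodXExp_rowVar_eq_of_mem_support k n α a hd
    exact drlLower_prodXExp_rowVar_leadExp hα hbd hg hne

/-- with respect to the degree reverse lexicographic order refining the
variable order `x_{i,j}^{(l)} < x_{i',j'}^{(l')}` iff `(l,i,j) < (l',i',j')`
lexicographically, the initial monomial of `φ(α^{(a)})` is
`x_{r+1,α_p}^{(l)} ⋯ x_{p,α_{r+1}}^{(l)} x_{1,α_r}^{(l+1)} ⋯ x_{r,α_1}^{(l+1)}`: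
this monomial occurs in `φ(α^{(a)})`, and every other monomial of `φ(α^{(a)})`
is smaller. -/
theorem initial_monomial_of_coeffMinor (k : Type) [Field k] (p m n : ℕ)
    (hp : 0 < p) (hm : 0 < m)
    (α : Fin p → ℕ) (hα : StrictMono α) (hbd : ∀ i, α i < m + p)
    (a : ℕ) (ha : a ≤ n * p) :
    MvPolynomial.coeff (leadExp α a) (coeffMinor k n α a) ≠ 0 ∧
    ∀ d ∈ (coeffMinor k n α a).support, d ≠ leadExp α a →
      drlLower p m d (leadExp α a) :=
  initial_monomial_of_coeffMinor_general k p m n hp α hα hbd a ha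
end

section
/- The coefficient φ(α^{(a)}) of t^a in the α-th maximal minor of M(t) equals the signed sum Σ ε_J · φ(J) over all strictly increasing p-tuples J from {1,...,(n+1)(m+p)} with Σ_i(j_i − i) = a(m+p) + Σ_j(α_j − j) and J ≡ α mod (m+p) as multisets, where φ(J) is the J-th maximal minor of the p×(n+1)(m+p) matrix N obtained by concatenating the coefficient matrices N_0, N_1, ..., N_n of M(t), and ε_J is the sign of the permutation sorting (j_1 mod (m+p), ..., j_p mod (m+p)). -/
/-!
Expanding the determinant multilinearly in its columns, the coefficient of `t^a` in the
`α`-th minor of `M(t)` is the sum, over exponent vectors `r` with `∑ r_j = a`, of the minor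
of `N` on the columns `r_j (m+p) + α_j`. Since `α` is strictly increasing these columns are
distinct with residues `α`; sorting them gives the increasing tuple `J`, at the cost of the
sign of the sorting permutation, and `r` is recovered from `J` by reading off the quotients
`j_i div (m+p)` in residue order.
-/

open MvPolynomial

open Finset Matrix

theorem Matrix.det_of_sum_col {R ι n : Type*} [CommRing R] [Fintype n] [DecidableEq n]
    [DecidableEq ι] (s : n → Finset ι) (f : n → ι → n → R) :
    det (of fun i j => ∑ l ∈ s j, f j l i) =
      ∑ r ∈ Fintype.piFinset s, det (of fun i j => f j (r j) i) := by
  rw [← det_transpose]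
  have := (detRowAlternating (R := R) (n := n)).map_sum_finset f s
  convert this using 1
  · congr 1
    ext i j
    simp [Finset.sum_apply]
  · refine Finset.sum_congr rfl fun r _ => ?_
    rw [← det_transpose]
    rfl

theorem Polynomial.det_of_C_mul_X_pow {R n : Type*} [CommRing R] [Fintype n] [DecidableEq n]
    (c : Matrix n n R) (r : n → ℕ) :
    det (of fun i j => Polynomial.C (c i j) * Polynomial.X ^ r j) =
      Polynomial.C c.det * Polynomial.X ^ ∑ j, r j := by
  simp_rw [mul_comm (Polynomial.C _)]
  refine (det_mul_row (fun j => Polynomial.X ^ r j) (Polynomial.C.mapMatrix c)).trans ?_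
  rw [← RingHom.map_det, prod_pow_eq_pow_sum, mul_comm]

theorem Polynomial.coeff_det_of_sum_C_mul_X_pow {R n : Type*} [CommRing R] [Fintype n]
    [DecidableEq n] (c : n → n → ℕ → R) (s : Finset ℕ) (a : ℕ) :
    (det (of fun i j => ∑ l ∈ s, Polynomial.C (c i j l) * Polynomial.X ^ l)).coeff a =
      ∑ r ∈ Fintype.piFinset (fun _ => s) with ∑ j, r j = a, det (of fun i j => c i j (r j)) := by
  rw [det_of_sum_col (fun _ => s) fun j l i => Polynomial.C (c i j l) * Polynomial.X ^ l,
    Polynomial.finsetSum_coeff, sum_filter]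
  refine sum_congr rfl fun r _ => ?_
  have h := det_of_C_mul_X_pow (of fun i j => c i j (r j)) r
  simp only [of_apply] at h
  rw [h, Polynomial.coeff_C_mul_X_pow]
  simp only [eq_comm]

namespace Tuple

variable {β : Type*} [LinearOrder β] {p : ℕ}

theorem comp_sort_eq_of_map_univ_eq {f g : Fin p → β} (hg : Monotone g)
    (h : univ.val.map f = univ.val.map g) : f ∘ sort f = g := by
  rw [Fin.univ_val_map, Fin.univ_val_map, Multiset.coe_eq_coe] at h
  exact List.ofFn_injective <| ((sort f).ofFn_comp_perm f |>.trans h).eq_of_sortedLE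
    (monotone_sort f).sortedLE_ofFn hg.sortedLE_ofFn

theorem sort_comp_perm_of_strictMono {α : Fin p → β} (hα : StrictMono α)
    (τ : Equiv.Perm (Fin p)) : sort (α ∘ τ) = τ⁻¹ := by
  refine (eq_sort_iff.2 ⟨?_, fun i j hij h => ?_⟩).symm
  · simpa [Function.comp_def] using hα.monotone
  · simp at h
    exact absurd (hα.injective h) hij.ne

end Tuple

section StackedColumns

variable {p : ℕ} {q : ℕ} {α : Fin p → ℕ}

-- With `q = m + p`, the (0-based) column `r j * q + α j` of `N` is column `α j` of `N_{r j}`.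
variable (q α) in
def stackedCol (r : Fin p → ℕ) (j : Fin p) : ℕ := r j * q + α j

variable (q α) in
def admissibleCols (n a : ℕ) : Finset (Fin p → Fin ((n + 1) * q)) :=
  univ.filter fun J => (∀ i j : Fin p, i < j → J i < J j) ∧
    (∑ i : Fin p, (J i : ℕ)) = a * q + ∑ i : Fin p, α i ∧
    Multiset.map (fun i : Fin p => (J i : ℕ) % q) univ.val =
      Multiset.map (fun i : Fin p => α i % q) univ.val

variable (q) in
def sortedBlocks (K : Fin p → ℕ) (j : Fin p) : ℕ :=
  K (Tuple.sort (fun i => K i % q) j) / q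

theorem stackedCol_mod (hbd : ∀ j, α j < q) (r : Fin p → ℕ) (j : Fin p) :
    stackedCol q α r j % q = α j := by
  rw [stackedCol, Nat.mul_add_mod_self_right, Nat.mod_eq_of_lt (hbd j)]

theorem stackedCol_div (hbd : ∀ j, α j < q) (r : Fin p → ℕ) (j : Fin p) :
    stackedCol q α r j / q = r j := by
  rw [stackedCol, add_comm, Nat.add_mul_div_right _ _ (by grind [hbd j]), Nat.div_eq_of_lt (hbd j),
    zero_add]

theorem stackedCol_injective (hbd : ∀ j, α j < q) (hα : StrictMono α) (r : Fin p → ℕ) :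
    Function.Injective (stackedCol q α r) := fun i j h =>
  hα.injective <| by rw [← stackedCol_mod hbd r i, h, stackedCol_mod hbd r j]

theorem stackedCol_lt {n : ℕ} (hbd : ∀ j, α j < q) {r : Fin p → ℕ} (hr : ∀ j, r j < n + 1)
    (j : Fin p) : stackedCol q α r j < (n + 1) * q := by
  have := Nat.mul_le_mul_right q (Nat.lt_succ_iff.1 (hr j))
  grind [stackedCol, hbd j]

theorem sum_stackedCol (r : Fin p → ℕ) :
    ∑ j, stackedCol q α r j = (∑ j, r j) * q + ∑ j, α j := by
  rw [sum_mul, ← sum_add_distrib]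
  rfl

theorem sortedBlocks_stackedCol_comp_sort (hbd : ∀ j, α j < q) (hα : StrictMono α)
    (r : Fin p → ℕ) :
    sortedBlocks q (stackedCol q α r ∘ Tuple.sort (stackedCol q α r)) = r := by
  set τ := Tuple.sort (stackedCol q α r)
  have hres : (fun i => (stackedCol q α r ∘ τ) i % q) = α ∘ τ :=
    funext fun i => stackedCol_mod hbd r (τ i)
  funext j
  rw [sortedBlocks, hres, Tuple.sort_comp_perm_of_strictMono hα]
  simp [stackedCol_div hbd]

theorem mod_comp_sort_eq (hbd : ∀ j, α j < q) (hα : StrictMono α) {K : Fin p → ℕ}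
    (hK : univ.val.map (fun i => K i % q) = univ.val.map (fun i => α i % q)) :
    (fun i => K i % q) ∘ Tuple.sort (fun i => K i % q) = α := by
  refine Tuple.comp_sort_eq_of_map_univ_eq hα.monotone ?_
  rw [hK]
  exact Multiset.map_congr rfl fun i _ => Nat.mod_eq_of_lt (hbd i)

theorem stackedCol_sortedBlocks {K : Fin p → ℕ}
    (hres : (fun i => K i % q) ∘ Tuple.sort (fun i => K i % q) = α) :
    stackedCol q α (sortedBlocks q K) = K ∘ Tuple.sort (fun i => K i % q) := by
  funext j
  rw [stackedCol, sortedBlocks, ← congrFun hres j]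
  exact Nat.div_add_mod' _ q

theorem stackedCol_sortedBlocks_comp_sort {K : Fin p → ℕ} (hK : Monotone K)
    (hres : (fun i => K i % q) ∘ Tuple.sort (fun i => K i % q) = α) :
    stackedCol q α (sortedBlocks q K) ∘ Tuple.sort (stackedCol q α (sortedBlocks q K)) = K := by
  rw [stackedCol_sortedBlocks hres, Tuple.comp_perm_comp_sort_eq_comp_sort,
    Tuple.sort_eq_refl_iff_monotone.2 hK]
  rfl

theorem sum_admissibleCols_sortedBlocks {M : Type*} [AddCommMonoid M] {n a : ℕ} (hq : 0 < q)
    (hbd : ∀ j, α j < q) (hα : StrictMono α) (g : (Fin p → ℕ) → M) :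
    ∑ J ∈ admissibleCols q α n a, g (sortedBlocks q fun i => J i) =
      ∑ r ∈ Fintype.piFinset (fun _ => range (n + 1)) with ∑ j, r j = a, g r := by
  symm
  refine sum_bij'
    (fun r hr i => ⟨(stackedCol q α r ∘ Tuple.sort (stackedCol q α r)) i,
      stackedCol_lt hbd (by simpa using (mem_filter.1 hr).1) _⟩)
    (fun J _ => sortedBlocks q fun i => J i) (fun r hr => ?_) (fun J hJ => ?_)
    (fun r _ => sortedBlocks_stackedCol_comp_sort hbd hα r) (fun J hJ => ?_)
    (fun r _ => congrArg g (sortedBlocks_stackedCol_comp_sort hbd hα r).symm)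
  · obtain ⟨-, hsum⟩ := mem_filter.1 hr
    have hmono := (Tuple.monotone_sort (stackedCol q α r)).strictMono_of_injective
      ((stackedCol_injective hbd hα r).comp (Equiv.injective _))
    refine mem_filter.2 ⟨mem_univ _, fun i j hij => hmono hij, ?_, ?_⟩
    · simp only [Function.comp_apply]
      rw [Equiv.sum_comp (Tuple.sort _) (stackedCol q α r), sum_stackedCol, hsum]
    · have hres : (fun i => (stackedCol q α r ∘ Tuple.sort (stackedCol q α r)) i % q) =
          (fun i => α i % q) ∘ Tuple.sort (stackedCol q α r) :=
        funext fun i => by simp [stackedCol_mod hbd, Nat.mod_eq_of_lt (hbd _)]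
      rw [hres, ← Multiset.map_map, Multiset.map_univ_val_equiv]
  · obtain ⟨-, -, hsum, hK⟩ := mem_filter.1 hJ
    have hcols := stackedCol_sortedBlocks (mod_comp_sort_eq hbd hα hK)
    refine mem_filter.2 ⟨Fintype.mem_piFinset.2 fun j => mem_range.2 ?_, ?_⟩
    · exact Nat.div_lt_of_lt_mul (by simpa [mul_comm] using (J _).isLt)
    · refine Nat.eq_of_mul_eq_mul_right hq (Nat.add_right_cancel (m := ∑ j, α j) ?_)
      rw [← sum_stackedCol, hcols, ← hsum]
      exact Equiv.sum_comp (Tuple.sort _) fun i => (J i : ℕ)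
  · obtain ⟨-, hmono, -, hK⟩ := mem_filter.1 hJ
    have hKmono : Monotone fun i => (J i : ℕ) :=
      StrictMono.monotone fun i j hij => hmono i j hij
    funext i
    exact Fin.ext (congrFun (stackedCol_sortedBlocks_comp_sort hKmono
      (mod_comp_sort_eq hbd hα hK)) i)

theorem sign_smul_det_of_mem_admissibleCols {R : Type*} [CommRing R] {n a : ℕ}
    {J : Fin p → Fin ((n + 1) * q)} (hbd : ∀ j, α j < q) (hα : StrictMono α)
    (hJ : J ∈ admissibleCols q α n a) (x : Fin p → ℕ → ℕ → R) :
    (Equiv.Perm.sign (Tuple.sort fun i => (J i : ℕ) % q) : ℤ) •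
        det (of fun i j => x i ((J j : ℕ) % q) ((J j : ℕ) / q)) =
      det (of fun i j => x i (α j) (sortedBlocks q (fun i => J i) j)) := by
  have hres := mod_comp_sort_eq hbd hα (mem_filter.1 hJ).2.2.2
  have : (of fun i j => x i (α j) (sortedBlocks q (fun i => J i) j)) =
      (of fun i j => x i ((J j : ℕ) % q) ((J j : ℕ) / q)).submatrix id
        (Tuple.sort fun i => (J i : ℕ) % q) := by
    ext i j
    simp [← hres, sortedBlocks]
  rw [this, det_permute', zsmul_eq_mul]

end StackedColumns

theorem minor_coeff_expansion_general (k : Type) [Field k] (p m n : ℕ)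
    (hp : 0 < p)
    (α : Fin p → ℕ) (hα : StrictMono α) (hbd : ∀ i, α i < m + p)
    (a : ℕ) :
    Polynomial.coeff
      (Matrix.det (Matrix.of fun i j : Fin p =>
        ∑ l ∈ Finset.range (n + 1),
          Polynomial.C (X ((i : ℕ), α j, l) : MvPolynomial (ℕ × ℕ × ℕ) k) *
            Polynomial.X ^ l)) a =
    ∑ J ∈ Finset.univ.filter (fun J : Fin p → Fin ((n + 1) * (m + p)) =>
        (∀ i j : Fin p, i < j → J i < J j) ∧
        (∑ i : Fin p, (J i : ℕ)) = a * (m + p) + ∑ i : Fin p, α i ∧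
        Multiset.map (fun i : Fin p => (J i : ℕ) % (m + p)) Finset.univ.val =
          Multiset.map (fun i : Fin p => α i % (m + p)) Finset.univ.val),
      ((Equiv.Perm.sign (Tuple.sort fun i : Fin p => (J i : ℕ) % (m + p)) : ℤ) •
        Matrix.det (Matrix.of fun i j : Fin p =>
          (X ((i : ℕ), (J j : ℕ) % (m + p), (J j : ℕ) / (m + p)) :
            MvPolynomial (ℕ × ℕ × ℕ) k))) := by
  rw [Polynomial.coeff_det_of_sum_C_mul_X_pow
      (fun (i j : Fin p) l => (X ((i : ℕ), α j, l) : MvPolynomial (ℕ × ℕ × ℕ) k)),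
    ← sum_admissibleCols_sortedBlocks (Nat.add_pos_right m hp) hbd hα]
  exact (sum_congr rfl fun J hJ =>
    sign_smul_det_of_mem_admissibleCols hbd hα hJ fun i r l => X ((i : ℕ), r, l)).symm

/-- the coefficient `φ(α^{(a)})` of `t^a` in the `α`-th maximal minor of
`M(t)` equals the signed sum `Σ ε_J φ(J)` over strictly increasing `p`-tuples `J` of
columns of the concatenated matrix `N = [N_0 | ⋯ | N_n]` with `|J| = |α^{(a)}|`
(equivalently `Σ J_i = a(m+p) + Σ α_i`) and `J ≡ α mod (m+p)` as multisets, where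
`φ(J)` is the `J`-th maximal minor of `N` and `ε_J` is the sign of the permutation
sorting `(j_1 mod (m+p), …, j_p mod (m+p))`.  (All indices 0-based; the column `c`
of `N` carries the variable `x_{i, c mod (m+p)}^{(c div (m+p))}`.) -/
theorem minor_coeff_expansion (k : Type) [Field k] (p m n : ℕ)
    (hp : 0 < p) (hm : 0 < m)
    (α : Fin p → ℕ) (hα : StrictMono α) (hbd : ∀ i, α i < m + p)
    (a : ℕ) (ha : a ≤ n * p) :
    Polynomial.coeff
      (Matrix.det (Matrix.of fun i j : Fin p =>
        ∑ l ∈ Finset.range (n + 1),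
          Polynomial.C (X ((i : ℕ), α j, l) : MvPolynomial (ℕ × ℕ × ℕ) k) *
            Polynomial.X ^ l)) a =
    ∑ J ∈ Finset.univ.filter (fun J : Fin p → Fin ((n + 1) * (m + p)) =>
        (∀ i j : Fin p, i < j → J i < J j) ∧
        (∑ i : Fin p, (J i : ℕ)) = a * (m + p) + ∑ i : Fin p, α i ∧
        Multiset.map (fun i : Fin p => (J i : ℕ) % (m + p)) Finset.univ.val =
          Multiset.map (fun i : Fin p => α i % (m + p)) Finset.univ.val),
      ((Equiv.Perm.sign (Tuple.sort fun i : Fin p => (J i : ℕ) % (m + p)) : ℤ) •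
        Matrix.det (Matrix.of fun i j : Fin p =>
          (X ((i : ℕ), (J j : ℕ) % (m + p), (J j : ℕ) / (m + p)) :
            MvPolynomial (ℕ × ℕ × ℕ) k))) :=
  minor_coeff_expansion_general k p m n hp α hα hbd a
end
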